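/- For all real numbers t₁ < t₂ < t₃ < t₄ < t₁ + 2π, let L₁ = ∫_{s=t₁}^{t₂} ∫_{u=t₃}^{t₄} 1/|exp(is) − exp(iu)|² du ds and L₂ = ∫_{s=t₂}^{t₃} ∫_{u=t₄}^{t₁+2π} 1/|exp(is) − exp(iu)|² du ds. Then exp(−L₁) + exp(−L₂) = 1. -/

import Mathlib

open MeasureTheory Filter Topology Set
open scoped ENNReal

noncomputable section

instance : MeasurableSpace Circle := borel Circle
instance : BorelSpace Circle := ⟨rfl⟩

/-- Four points of the unit circle in (strict) counterclockwise order. -/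
def Ccw4 (a b c d : Circle) : Prop :=
  ∃ t₁ t₂ t₃ t₄ : ℝ, t₁ < t₂ ∧ t₂ < t₃ ∧ t₃ < t₄ ∧ t₄ < t₁ + 2 * Real.pi ∧
    a = Circle.exp t₁ ∧ b = Circle.exp t₂ ∧ c = Circle.exp t₃ ∧ d = Circle.exp t₄

/-- Three points of the unit circle in counterclockwise (cyclic) order. -/
def Ccw3 (a b c : Circle) : Prop :=
  ∃ t₁ t₂ t₃ : ℝ, t₁ < t₂ ∧ t₂ < t₃ ∧ t₃ < t₁ + 2 * Real.pi ∧
    a = Circle.exp t₁ ∧ b = Circle.exp t₂ ∧ c = Circle.exp t₃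

/-- The closed counterclockwise arc from `a` to `b` on the circle. -/
def arcCC (a b : Circle) : Set Circle :=
  {z | ∃ t₁ t t₂ : ℝ, t₁ ≤ t ∧ t ≤ t₂ ∧ t₂ < t₁ + 2 * Real.pi ∧
    a = Circle.exp t₁ ∧ z = Circle.exp t ∧ b = Circle.exp t₂}

/-- The box of geodesics `[a,b] × [c,d]`. -/
def boxSet (a b c d : Circle) : Set (Circle × Circle) := arcCC a b ×ˢ arcCC c d

/-- The space `G` of geodesics of the unit disk: pairs of distinct boundary points. -/
def geodSet : Set (Circle × Circle) := {p | p.1 ≠ p.2}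

/-- The cross-ratio of four points of `ℂ`. -/
def cr (a b c d : ℂ) : ℂ := ((a - c) * (b - d)) / ((a - d) * (b - c))

/-- The Liouville measure on the space of geodesics: the pushforward under
`(s,u) ↦ (exp (i s), exp (i u))` of the measure `ds du / |exp(is) - exp(iu)|²`
on a fundamental domain for the periodicity. -/
def liouville : Measure (Circle × Circle) :=
  Measure.map (fun p : ℝ × ℝ => (Circle.exp p.1, Circle.exp p.2))
    (((volume : Measure (ℝ × ℝ)).restrict
        (Set.Ico 0 (2 * Real.pi) ×ˢ Set.Ico 0 (2 * Real.pi))).withDensity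
      fun p : ℝ × ℝ =>
        ENNReal.ofReal
          (1 / ‖Complex.exp ((p.1 : ℂ) * Complex.I) -
            Complex.exp ((p.2 : ℂ) * Complex.I)‖ ^ 2))

/-- `φ : Circle → Circle` is the boundary restriction of a disk Möbius transformation. -/
def IsMobius (φ : Circle → Circle) : Prop :=
  ∃ α β : ℂ, ‖α‖ ^ 2 - ‖β‖ ^ 2 = 1 ∧
    ∀ z : Circle, (φ z : ℂ) = (α * z + β) / ((starRingEnd ℂ) β * z + (starRingEnd ℂ) α)

/-- A homeomorphism of the circle is orientation-preserving if it preserves the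
counterclockwise cyclic order of triples of points. -/
def OrientationPreserving (h : Circle ≃ₜ Circle) : Prop :=
  ∀ a b c : Circle, Ccw3 a b c → Ccw3 (h a) (h b) (h c)

/-- The pullback Liouville current `L_h`, with `L_h (A) = L ((h × h) (A))`. -/
def pullbackCurrent (h : Circle ≃ₜ Circle) : Measure (Circle × Circle) :=
  Measure.map (⇑(h.prodCongr h).symm) liouville

/-- The quasisymmetric constant `M(h)`: the supremum over symmetric boxes `Q`
(those with `L(Q) = log 2`) of `L((h×h)(Q)) / log 2`. -/
def qsConst (h : Circle ≃ₜ Circle) : ℝ≥0∞ :=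
  ⨆ (a : Circle) (b : Circle) (c : Circle) (d : Circle) (_ : Ccw4 a b c d)
    (_ : liouville (boxSet a b c d) = ENNReal.ofReal (Real.log 2)),
    liouville ((fun p : Circle × Circle => (h p.1, h p.2)) '' boxSet a b c d) /
      ENNReal.ofReal (Real.log 2)

/-- `h` is quasisymmetric if its quasisymmetric constant is finite. -/
def Quasisymmetric (h : Circle ≃ₜ Circle) : Prop := qsConst h < ⊤

/-- A geodesic current: a Radon measure on the space of geodesics, encoded as a Borel
measure on `Circle × Circle` which vanishes on the diagonal and is finite on compact
subsets of the off-diagonal. -/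
def IsGeodesicCurrent (μ : Measure (Circle × Circle)) : Prop :=
  μ {p : Circle × Circle | p.1 = p.2} = 0 ∧
    ∀ K : Set (Circle × Circle), IsCompact K → K ⊆ geodSet → μ K < ⊤

/-- A bounded geodesic current. -/
def BoundedCurrent (μ : Measure (Circle × Circle)) : Prop :=
  IsGeodesicCurrent μ ∧
    ∀ ξ : Circle × Circle → ℝ, Continuous ξ → tsupport ξ ⊆ geodSet →
      ∃ C : ℝ, ∀ φ : Circle → Circle, IsMobius φ → |∫ p, ξ (φ p.1, φ p.2) ∂μ| ≤ C

/-- Uniform weak-star convergence of measures on the space of geodesics. -/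
def UnifWeakStarTendsto (μs : ℕ → Measure (Circle × Circle))
    (μ : Measure (Circle × Circle)) : Prop :=
  ∀ ξ : Circle × Circle → ℝ, Continuous ξ → tsupport ξ ⊆ geodSet →
    ∀ ε : ℝ, 0 < ε → ∃ N : ℕ, ∀ n ≥ N, ∀ φ : Circle → Circle, IsMobius φ →
      |∫ p, ξ (φ p.1, φ p.2) ∂(μs n) - ∫ p, ξ (φ p.1, φ p.2) ∂μ| ≤ ε

/-- A point lies in the (topological) support of a measure. -/
def MemSupport (μ : Measure (Circle × Circle)) (p : Circle × Circle) : Prop :=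
  ∀ U : Set (Circle × Circle), IsOpen U → p ∈ U → 0 < μ U

/-- The hyperbolic translation of length `s` along the geodesic from `p` to `q`. -/
def hypTranslate (s : ℝ) (p q w : ℂ) : ℂ :=
  ((Real.exp s : ℂ) * q * (w - p) - p * (w - q)) /
    ((Real.exp s : ℂ) * (w - p) - (w - q))

/-- `e` is the elementary earthquake of amplitude `s` along the geodesic `(x, y)`
applied to `h`: it agrees with `h` on the closed counterclockwise arc from `x` to `y`,
and with `T_s ∘ h` on the complementary open arc. -/
def IsElemEarthquake (x y : Circle) (s : ℝ) (h e : Circle ≃ₜ Circle) : Prop :=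
  (∀ z ∈ arcCC x y, e z = h z) ∧
    ∀ z : Circle, z ∉ arcCC x y → (e z : ℂ) = hypTranslate s (h x) (h y) (h z)

/-- The disk Möbius transformation with parameters `g = (α, β)`. -/
def mobiusFun (g : ℂ × ℂ) : ℂ → ℂ := fun z =>
  (g.1 * z + g.2) / ((starRingEnd ℂ) g.2 * z + (starRingEnd ℂ) g.1)

/-- Product of Möbius parameters, corresponding to composition of the transformations. -/
def mobiusComp (g₁ g₂ : ℂ × ℂ) : ℂ × ℂ :=
  (g₁.1 * g₂.1 + g₁.2 * (starRingEnd ℂ) g₂.2, g₁.1 * g₂.2 + g₁.2 * (starRingEnd ℂ) g₂.1)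

/-- The point `exp (i t)` of the unit circle, as a complex number. -/
def cirexp (t : ℝ) : ℂ := Complex.exp ((t : ℂ) * Complex.I)

/-- The chord length `|exp (i s) - exp (i u)|`. -/
def chord (s u : ℝ) : ℝ := ‖cirexp s - cirexp u‖


lemma chord_sq (s u : ℝ) : chord s u ^ 2 = 4 * Real.sin ((u - s) / 2) ^ 2 := by
  have h : chord s u ^ 2 = Complex.normSq (cirexp s - cirexp u) := by
    rw [chord, Complex.sq_norm]
  rw [h, Complex.normSq_sub]
  have h1 : Complex.normSq (cirexp s) = 1 := by
    simp [cirexp, Complex.normSq_eq_norm_sq, Complex.norm_exp_ofReal_mul_I]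
  have h2 : Complex.normSq (cirexp u) = 1 := by
    simp [cirexp, Complex.normSq_eq_norm_sq, Complex.norm_exp_ofReal_mul_I]
  have h3 : (cirexp s * (starRingEnd ℂ) (cirexp u)).re = Real.cos (s - u) := by
    have he : cirexp s * (starRingEnd ℂ) (cirexp u)
        = Complex.exp (((s - u : ℝ) : ℂ) * Complex.I) := by
      simp only [cirexp, ← Complex.exp_conj, map_mul, Complex.conj_I, Complex.conj_ofReal,
        ← Complex.exp_add]
      congr 1; push_cast; ring
    rw [he, Complex.exp_ofReal_mul_I_re]
  rw [h1, h2, h3]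
  have h4 : Real.cos (s - u) = 1 - 2 * Real.sin ((u - s) / 2) ^ 2 := by
    have hc := Real.cos_sq ((s - u) / 2)
    have hp := Real.sin_sq_add_cos_sq ((s - u) / 2)
    have hn : Real.sin ((u - s) / 2) ^ 2 = Real.sin ((s - u) / 2) ^ 2 := by
      rw [show (u - s) / 2 = -((s - u) / 2) by ring, Real.sin_neg]; ring
    rw [hn]
    have : 2 * ((s - u) / 2) = s - u := by ring
    rw [this] at hc
    nlinarith
  rw [h4]; ring

open Real in
lemma innerInt (s z w : ℝ) (h1 : s < z) (h2 : z ≤ w) (h3 : w < s + 2 * π) :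
    ∫ u in z..w, 1 / chord s u ^ 2
      = 1 / 2 * (cos ((z - s) / 2) / sin ((z - s) / 2)
          - cos ((w - s) / 2) / sin ((w - s) / 2)) := by
  have hne : ∀ u ∈ Set.uIcc z w, sin ((u - s) / 2) ≠ 0 := by
    intro u hu
    rw [Set.uIcc_of_le h2] at hu
    have := hu.1; have := hu.2
    have : 0 < Real.sin ((u - s) / 2) :=
      Real.sin_pos_of_pos_of_lt_pi (by linarith) (by linarith [Real.pi_pos])
    linarith
  have hF : ∀ u ∈ Set.uIcc z w,
      HasDerivAt (fun u => -(1/2) * (cos ((u - s) / 2) / sin ((u - s) / 2)))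
        (1 / (4 * sin ((u - s) / 2) ^ 2)) u := by
    intro u hu
    have hv : HasDerivAt (fun u : ℝ => (u - s) / 2) (1 / 2) u := by
      simpa using ((hasDerivAt_id u).sub_const s).div_const 2
    have hc : HasDerivAt (fun u : ℝ => cos ((u - s) / 2))
        (-sin ((u - s) / 2) * (1 / 2)) u := (Real.hasDerivAt_cos _).comp u hv
    have hs : HasDerivAt (fun u : ℝ => sin ((u - s) / 2))
        (cos ((u - s) / 2) * (1 / 2)) u := (Real.hasDerivAt_sin _).comp u hv
    have hd := (hc.div hs (hne u hu)).const_mul (-(1/2) : ℝ)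
    refine hd.congr_deriv ?_
    have h0 := hne u hu
    have hpyt := Real.sin_sq_add_cos_sq ((u - s) / 2)
    field_simp
    nlinarith [hpyt]
  have hint : IntervalIntegrable (fun u => 1 / (4 * sin ((u - s) / 2) ^ 2)) MeasureTheory.volume z w := by
    apply ContinuousOn.intervalIntegrable
    apply ContinuousOn.div continuousOn_const
    · exact (Continuous.continuousOn (by continuity))
    · intro u hu
      have := hne u hu
      positivity
  have hcong : ∫ u in z..w, 1 / chord s u ^ 2
      = ∫ u in z..w, 1 / (4 * sin ((u - s) / 2) ^ 2) := by
    apply intervalIntegral.integral_congr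
    intro u _
    simp only [chord_sq]
  rw [hcong, intervalIntegral.integral_eq_sub_of_hasDerivAt hF hint]
  ring

open Real in
lemma boxMass (x y z w : ℝ) (hxy : x < y) (hyz : y < z) (hzw : z < w)
    (hwx : w < x + 2 * π) :
    ∫ s in x..y, ∫ u in z..w, 1 / chord s u ^ 2
      = (Real.log (sin ((w - y) / 2)) - Real.log (sin ((z - y) / 2)))
        - (Real.log (sin ((w - x) / 2)) - Real.log (sin ((z - x) / 2))) := by
  have hxy' : x ≤ y := hxy.le
  have hsinz : ∀ s ∈ Set.uIcc x y, 0 < sin ((z - s) / 2) := by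
    intro s hs; rw [Set.uIcc_of_le hxy'] at hs
    exact Real.sin_pos_of_pos_of_lt_pi (by linarith [hs.2]) (by linarith [hs.1, Real.pi_pos])
  have hsinw : ∀ s ∈ Set.uIcc x y, 0 < sin ((w - s) / 2) := by
    intro s hs; rw [Set.uIcc_of_le hxy'] at hs
    exact Real.sin_pos_of_pos_of_lt_pi (by linarith [hs.2]) (by linarith [hs.1, Real.pi_pos])
  have hcong : ∫ s in x..y, ∫ u in z..w, 1 / chord s u ^ 2
      = ∫ s in x..y, 1 / 2 * (cos ((z - s) / 2) / sin ((z - s) / 2)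
          - cos ((w - s) / 2) / sin ((w - s) / 2)) := by
    apply intervalIntegral.integral_congr
    intro s hs
    rw [Set.uIcc_of_le hxy'] at hs
    exact innerInt s z w (by linarith [hs.2]) hzw.le (by linarith [hs.1])
  rw [hcong]
  have hF : ∀ s ∈ Set.uIcc x y,
      HasDerivAt (fun s => Real.log (sin ((w - s) / 2)) - Real.log (sin ((z - s) / 2)))
        (1 / 2 * (cos ((z - s) / 2) / sin ((z - s) / 2)
          - cos ((w - s) / 2) / sin ((w - s) / 2))) s := by
    intro s hs
    have hvz : HasDerivAt (fun s : ℝ => (z - s) / 2) (-1 / 2) s := by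
      simpa using ((hasDerivAt_id s).const_sub z).div_const 2
    have hvw : HasDerivAt (fun s : ℝ => (w - s) / 2) (-1 / 2) s := by
      simpa using ((hasDerivAt_id s).const_sub w).div_const 2
    have hsz : HasDerivAt (fun s : ℝ => sin ((z - s) / 2))
        (cos ((z - s) / 2) * (-1 / 2)) s := (Real.hasDerivAt_sin _).comp s hvz
    have hsw : HasDerivAt (fun s : ℝ => sin ((w - s) / 2))
        (cos ((w - s) / 2) * (-1 / 2)) s := (Real.hasDerivAt_sin _).comp s hvw
    have hlz := (Real.hasDerivAt_log (hsinz s hs).ne').comp s hsz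
    have hlw := (Real.hasDerivAt_log (hsinw s hs).ne').comp s hsw
    have hd := hlw.sub hlz
    refine hd.congr_deriv ?_
    field_simp
    ring
  have hint : IntervalIntegrable (fun s => 1 / 2 * (cos ((z - s) / 2) / sin ((z - s) / 2)
      - cos ((w - s) / 2) / sin ((w - s) / 2))) MeasureTheory.volume x y := by
    apply ContinuousOn.intervalIntegrable
    have cz : Continuous fun s : ℝ => (z - s) / 2 := by fun_prop
    have cw : Continuous fun s : ℝ => (w - s) / 2 := by fun_prop
    apply ContinuousOn.mul continuousOn_const
    exact ContinuousOn.sub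
      (ContinuousOn.div (Real.continuous_cos.comp cz).continuousOn
        (Real.continuous_sin.comp cz).continuousOn (fun s hs => (hsinz s hs).ne'))
      (ContinuousOn.div (Real.continuous_cos.comp cw).continuousOn
        (Real.continuous_sin.comp cw).continuousOn (fun s hs => (hsinw s hs).ne'))
  rw [intervalIntegral.integral_eq_sub_of_hasDerivAt hF hint]

/-- the Liouville masses of a box and of its orthogonal box satisfy
`exp (−L₁) + exp (−L₂) = 1`. -/
theorem stmt17 (t₁ t₂ t₃ t₄ : ℝ) (h₁₂ : t₁ < t₂) (h₂₃ : t₂ < t₃) (h₃₄ : t₃ < t₄)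
    (h₄₁ : t₄ < t₁ + 2 * Real.pi) (L₁ L₂ : ℝ)
    (hL₁ : L₁ = ∫ s in t₁..t₂, ∫ u in t₃..t₄, 1 / chord s u ^ 2)
    (hL₂ : L₂ = ∫ s in t₂..t₃, ∫ u in t₄..(t₁ + 2 * Real.pi), 1 / chord s u ^ 2) :
    Real.exp (-L₁) + Real.exp (-L₂) = 1 := by
  have hpi := Real.pi_pos
  set s21 := Real.sin ((t₂ - t₁) / 2) with hs21
  set s31 := Real.sin ((t₃ - t₁) / 2) with hs31
  set s41 := Real.sin ((t₄ - t₁) / 2) with hs41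
  set s32 := Real.sin ((t₃ - t₂) / 2) with hs32
  set s42 := Real.sin ((t₄ - t₂) / 2) with hs42
  set s43 := Real.sin ((t₄ - t₃) / 2) with hs43
  have p21 : 0 < s21 := Real.sin_pos_of_pos_of_lt_pi (by linarith) (by linarith)
  have p31 : 0 < s31 := Real.sin_pos_of_pos_of_lt_pi (by linarith) (by linarith)
  have p41 : 0 < s41 := Real.sin_pos_of_pos_of_lt_pi (by linarith) (by linarith)
  have p32 : 0 < s32 := Real.sin_pos_of_pos_of_lt_pi (by linarith) (by linarith)
  have p42 : 0 < s42 := Real.sin_pos_of_pos_of_lt_pi (by linarith) (by linarith)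
  have p43 : 0 < s43 := Real.sin_pos_of_pos_of_lt_pi (by linarith) (by linarith)
  have hL1' : L₁ = (Real.log s42 - Real.log s32) - (Real.log s41 - Real.log s31) := by
    rw [hL₁, boxMass t₁ t₂ t₃ t₄ h₁₂ h₂₃ h₃₄ h₄₁]
  have hq3 : (t₁ + 2 * Real.pi - t₃) / 2 = Real.pi - (t₃ - t₁) / 2 := by ring
  have hq2 : (t₁ + 2 * Real.pi - t₂) / 2 = Real.pi - (t₂ - t₁) / 2 := by ring
  have hL2' : L₂ = (Real.log s31 - Real.log s43) - (Real.log s21 - Real.log s42) := by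
    rw [hL₂, boxMass t₂ t₃ t₄ (t₁ + 2 * Real.pi) h₂₃ h₃₄ h₄₁ (by linarith),
      hq3, hq2, Real.sin_pi_sub, Real.sin_pi_sub]
  have e1 : Real.exp (-L₁) = s32 * s41 / (s42 * s31) := by
    rw [hL1', show -((Real.log s42 - Real.log s32) - (Real.log s41 - Real.log s31))
        = (Real.log s32 + Real.log s41) - (Real.log s42 + Real.log s31) by ring,
      Real.exp_sub, Real.exp_add, Real.exp_add, Real.exp_log p32, Real.exp_log p41,
      Real.exp_log p42, Real.exp_log p31]
  have e2 : Real.exp (-L₂) = s43 * s21 / (s31 * s42) := by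
    rw [hL2', show -((Real.log s31 - Real.log s43) - (Real.log s21 - Real.log s42))
        = (Real.log s43 + Real.log s21) - (Real.log s31 + Real.log s42) by ring,
      Real.exp_sub, Real.exp_add, Real.exp_add, Real.exp_log p43, Real.exp_log p21,
      Real.exp_log p31, Real.exp_log p42]
  have pt : s32 * s41 + s43 * s21 = s42 * s31 := by
    rw [hs21, hs31, hs41, hs32, hs42, hs43,
      show (t₂ - t₁) / 2 = t₂/2 - t₁/2 by ring, show (t₃ - t₁) / 2 = t₃/2 - t₁/2 by ring,
      show (t₄ - t₁) / 2 = t₄/2 - t₁/2 by ring, show (t₃ - t₂) / 2 = t₃/2 - t₂/2 by ring,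
      show (t₄ - t₂) / 2 = t₄/2 - t₂/2 by ring, show (t₄ - t₃) / 2 = t₄/2 - t₃/2 by ring]
    simp only [Real.sin_sub]
    ring
  rw [e1, e2]
  field_simp
  nlinarith [pt, mul_pos p42 p31]
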